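/- The star-controlled GCID system with two components, alphabet V = {a, b, A, B}, terminal alphabet T = {a, b}, axiom set {AB} in component C1, initial component C1, final component set {C1}, and rules r1.1: (1, (A, a, λ)_I, 2), r2.1: (2, (B, b, λ)_I, 1), r1.2: (1, (λ, A, λ)_D, 2), r2.2: (2, (λ, B, λ)_D, 1) generates exactly the language { aⁿbⁿ : n ≥ 0 }; in particular, the non-regular language { aⁿbⁿ : n ≥ 0 } belongs to GCID_S(2; 1, 1, 0; 1, 0, 0). -/

import Mathlib

/-!
Graph-controlled insertion-deletion (GCID) systems.

Symbols are drawn from the universal symbol set `ℕ`, strings are lists of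
symbols.  A GCID system `Π = (k, V, T, A, H, i0, F, R)` has `k` components;
rules `(i, r, j)` move a string from component `i` to component `j`, where
`r` is an insertion rule `(u, η, v)_I` (rewriting `uv → uηv`) or a deletion
rule `(u, δ, v)_D` (rewriting `uδv → uv`), with `u, v ∈ V*` and `η, δ ∈ V⁺`.
-/

namespace GCIDPaper

/-- Strings over the universal symbol set `ℕ`. -/
abbrev Word : Type := List ℕ

/-- An insertion rule `(u, s, v)_I` (when `isInsertion = true`) or a deletion
rule `(u, s, v)_D` (when `isInsertion = false`), with left context `lctx = u`,
inserted resp. deleted string `core = s`, and right context `rctx = v`. -/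
structure InsDelRule : Type where
  isInsertion : Bool
  lctx : Word
  core : Word
  rctx : Word
  deriving DecidableEq

/-- The insertion rule `(u, η, v)_I`. -/
def insRule (u η v : Word) : InsDelRule := ⟨true, u, η, v⟩

/-- The deletion rule `(u, δ, v)_D`. -/
def delRule (u δ v : Word) : InsDelRule := ⟨false, u, δ, v⟩

/-- Applying a rule to a string: the insertion rule `(u, η, v)_I` corresponds
to the rewriting `uv → uηv`, the deletion rule `(u, δ, v)_D` to `uδv → uv`. -/
def InsDelRule.Applies (r : InsDelRule) (w w' : Word) : Prop :=
  (r.isInsertion = true →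
    ∃ x y, w = x ++ r.lctx ++ r.rctx ++ y ∧
      w' = x ++ r.lctx ++ r.core ++ r.rctx ++ y) ∧
  (r.isInsertion = false →
    ∃ x y, w = x ++ r.lctx ++ r.core ++ r.rctx ++ y ∧
      w' = x ++ r.lctx ++ r.rctx ++ y)

/-- A graph-controlled insertion-deletion system.  The components are
numbered `1, …, k`; `i0` is the initial component, `F` the set of final
components, `axioms` the finite set of axioms (placed in component `i0`),
and `R` the finite set of rules `(i, r, j)`. -/
structure System : Type where
  k : ℕ
  V : Finset ℕ
  T : Finset ℕ
  axioms : Finset Word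
  i0 : ℕ
  F : Finset ℕ
  R : Finset (ℕ × InsDelRule × ℕ)
  k_pos : 1 ≤ k
  T_sub_V : T ⊆ V
  axioms_over_V : ∀ w ∈ axioms, ∀ a ∈ w, a ∈ V
  i0_mem : i0 ∈ Finset.Icc 1 k
  F_sub : F ⊆ Finset.Icc 1 k
  R_wf : ∀ q ∈ R, q.1 ∈ Finset.Icc 1 k ∧ q.2.2 ∈ Finset.Icc 1 k ∧
    q.2.1.core ≠ [] ∧ (∀ a ∈ q.2.1.lctx, a ∈ V) ∧
    (∀ a ∈ q.2.1.core, a ∈ V) ∧ (∀ a ∈ q.2.1.rctx, a ∈ V)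

/-- One derivation step between configurations: `(w)_i ⇒ (w')_j` if some rule
`(i, r, j)` of the system applied to `w` yields `w'`. -/
def Step (S : System) (c c' : Word × ℕ) : Prop :=
  ∃ q ∈ S.R, q.1 = c.2 ∧ q.2.2 = c'.2 ∧ q.2.1.Applies c.1 c'.1

/-- The reflexive-transitive closure `⇒*` of the step relation. -/
def Derives (S : System) : Word × ℕ → Word × ℕ → Prop :=
  Relation.ReflTransGen (Step S)

/-- The language generated:
`L(Π) = { w ∈ T* : (x)_{i0} ⇒* (w)_{i_f} for some axiom x and some i_f ∈ F }`. -/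
def language (S : System) : Set Word :=
  { w | (∀ a ∈ w, a ∈ S.T) ∧
    ∃ x ∈ S.axioms, ∃ f ∈ S.F, Derives S (x, S.i0) (w, f) }

/-- A single rule obeys the size bounds `(n, i', i''; m, j', j'')`. -/
def InsDelRule.SizeLE (r : InsDelRule) (n i' i'' m j' j'' : ℕ) : Prop :=
  (r.isInsertion = true →
    r.core.length ≤ n ∧ r.lctx.length ≤ i' ∧ r.rctx.length ≤ i'') ∧
  (r.isInsertion = false →
    r.core.length ≤ m ∧ r.lctx.length ≤ j' ∧ r.rctx.length ≤ j'')

/-- The system has size `(k; n, i', i''; m, j', j'')`. -/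
def HasSize (S : System) (k n i' i'' m j' j'' : ℕ) : Prop :=
  S.k = k ∧ ∀ q ∈ S.R, q.2.1.SizeLE n i' i'' m j' j''

/-- Star-controlled: the underlying undirected control graph (with an edge
`{Ci, Cj}` whenever there is a rule `(i, r, j)`) has exactly the edge set
`{ {C1, Ci} : 2 ≤ i ≤ k }`; in particular there are no loops. -/
def StarControlled (S : System) : Prop :=
  (∀ q ∈ S.R, ∃ i ∈ Finset.Icc 2 S.k, ({q.1, q.2.2} : Finset ℕ) = {1, i}) ∧
  (∀ i ∈ Finset.Icc 2 S.k, ∃ q ∈ S.R, ({q.1, q.2.2} : Finset ℕ) = {1, i})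

/-- The class `GCID(k; n, i', i''; m, j', j'')` of languages generated by GCID
systems of the given size. -/
def GCIDClass (k n i' i'' m j' j'' : ℕ) : Set (Set Word) :=
  { L | ∃ S : System, HasSize S k n i' i'' m j' j'' ∧ language S = L }

/-- The class `GCID_S(k; n, i', i''; m, j', j'')` of languages generated by
star-controlled GCID systems of the given size. -/
def GCID_S (k n i' i'' m j' j'' : ℕ) : Set (Set Word) :=
  { L | ∃ S : System, StarControlled S ∧ HasSize S k n i' i'' m j' j'' ∧
    language S = L }

/-- The star-controlled GCID system with two components, alphabet
`V = {a, b, A, B}` (encoded as `a = 0`, `b = 1`, `A = 2`, `B = 3`), terminal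
alphabet `T = {a, b}`, axiom `AB` in component `C1`, initial component `C1`,
final component set `{C1}`, and rules
`r1.1 : (1, (A, a, λ)_I, 2)`, `r2.1 : (2, (B, b, λ)_I, 1)`,
`r1.2 : (1, (λ, A, λ)_D, 2)`, `r2.2 : (2, (λ, B, λ)_D, 1)`. -/
def anbnSystem : System where
  k := 2
  V := {0, 1, 2, 3}
  T := {0, 1}
  axioms := {[2, 3]}
  i0 := 1
  F := {1}
  R := {(1, insRule [2] [0] [], 2), (2, insRule [3] [1] [], 1),
        (1, delRule [] [2] [], 2), (2, delRule [] [3] [], 1)}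
  k_pos := by decide
  T_sub_V := by decide
  axioms_over_V := by decide
  i0_mem := by decide
  F_sub := by decide
  R_wf := by decide

/-- The language `{ aⁿbⁿ : n ≥ 0 }`. -/
def anbnLang : Set Word :=
  { w | ∃ n : ℕ, w = List.replicate n 0 ++ List.replicate n 1 }

/-!
Every configuration reachable from `(AB)_1` has the form `(A^α a^n B^β b^m)_i` with
`α, β ≤ 1` and `n + β + 1 = m + α + i`. Since `A` and `B` occur at most once, each rule
applies at a determined position, and each rule changes both sides of this equation by
the same amount. A terminal word in the final component `C1` has `α = β = 0`, hence
`n = m`. Conversely, alternating the two insertions `n` times and then deleting `A` and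
`B` derives `aⁿbⁿ`.
-/

open List

lemma insRule_applies_iff {u η v w w' : Word} :
    (insRule u η v).Applies w w' ↔
      ∃ x y, w = x ++ u ++ v ++ y ∧ w' = x ++ u ++ η ++ v ++ y := by
  simp [InsDelRule.Applies, insRule]

lemma delRule_applies_iff {u δ v w w' : Word} :
    (delRule u δ v).Applies w w' ↔
      ∃ x y, w = x ++ u ++ δ ++ v ++ y ∧ w' = x ++ u ++ v ++ y := by
  simp [InsDelRule.Applies, delRule]

lemma step_of_mem_of_applies {S : System} {i j : ℕ} {r : InsDelRule} {w w' : Word}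
    (hr : (i, r, j) ∈ S.R) (h : r.Applies w w') : Step S (w, i) (w', j) :=
  ⟨(i, r, j), hr, rfl, rfl, h⟩

/-- The word `A^α a^n B^β b^m`. -/
def shape (α n β m : ℕ) : Word :=
  replicate α 2 ++ replicate n 0 ++ replicate β 3 ++ replicate m 1

lemma append_two_cons_eq_shape {x y : Word} {α n β m : ℕ} (hα : α ≤ 1)
    (h : x ++ 2 :: y = shape α n β m) :
    α = 1 ∧ x = [] ∧ y = replicate n 0 ++ replicate β 3 ++ replicate m 1 := by
  have h2 : (2 : ℕ) ∈ shape α n β m := h ▸ mem_append_right x mem_cons_self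
  obtain rfl : α = 1 := by
    by_contra hα1
    obtain rfl : α = 0 := by omega
    simp [shape, mem_replicate] at h2
  have hsplit :
      shape 1 n β m = [] ++ 2 :: (replicate n 0 ++ replicate β 3 ++ replicate m 1) := by
    simp [shape]
  rw [hsplit, eq_comm, append_cons_inj_of_notMem not_mem_nil (by simp [mem_replicate])] at h
  exact ⟨rfl, h.1.symm, h.2.2.symm⟩

lemma append_three_cons_eq_shape {x y : Word} {α n β m : ℕ} (hβ : β ≤ 1)
    (h : x ++ 3 :: y = shape α n β m) :
    β = 1 ∧ x = replicate α 2 ++ replicate n 0 ∧ y = replicate m 1 := by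
  have h3 : (3 : ℕ) ∈ shape α n β m := h ▸ mem_append_right x mem_cons_self
  obtain rfl : β = 1 := by
    by_contra hβ1
    obtain rfl : β = 0 := by omega
    simp [shape, mem_replicate] at h3
  have hsplit : shape α n 1 m = (replicate α 2 ++ replicate n 0) ++ 3 :: replicate m 1 := by
    simp [shape]
  rw [hsplit, eq_comm,
    append_cons_inj_of_notMem (by simp [mem_replicate]) (by simp [mem_replicate])] at h
  exact ⟨rfl, h.1.symm, h.2.2.symm⟩

def BalancedShape (c : Word × ℕ) : Prop :=
  ∃ α n β m, α ≤ 1 ∧ β ≤ 1 ∧ c.1 = shape α n β m ∧ n + β + 1 = m + α + c.2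

lemma BalancedShape.step {c c' : Word × ℕ} (hc : BalancedShape c)
    (h : Step anbnSystem c c') : BalancedShape c' := by
  obtain ⟨α, n, β, m, hα, hβ, hw, hbal⟩ := hc
  obtain ⟨q, hq, hi, hj, happ⟩ := h
  simp only [anbnSystem, Finset.mem_insert, Finset.mem_singleton] at hq
  rcases hq with rfl | rfl | rfl | rfl
  · obtain ⟨x, y, hx, hy⟩ := insRule_applies_iff.1 happ
    obtain ⟨rfl, rfl, rfl⟩ := append_two_cons_eq_shape hα (by simpa [hw] using hx.symm)
    refine ⟨1, n + 1, β, m, le_rfl, hβ, by simp [hy, shape, replicate_succ], by grind⟩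
  · obtain ⟨x, y, hx, hy⟩ := insRule_applies_iff.1 happ
    obtain ⟨rfl, rfl, rfl⟩ := append_three_cons_eq_shape hβ (by simpa [hw] using hx.symm)
    refine ⟨α, n, 1, m + 1, hα, le_rfl, by simp [hy, shape, replicate_succ], by grind⟩
  · obtain ⟨x, y, hx, hy⟩ := delRule_applies_iff.1 happ
    obtain ⟨rfl, rfl, rfl⟩ := append_two_cons_eq_shape hα (by simpa [hw] using hx.symm)
    refine ⟨0, n, β, m, zero_le_one, hβ, by simp [hy, shape], by grind⟩
  · obtain ⟨x, y, hx, hy⟩ := delRule_applies_iff.1 happ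
    obtain ⟨rfl, rfl, rfl⟩ := append_three_cons_eq_shape hβ (by simpa [hw] using hx.symm)
    refine ⟨α, n, 0, m, hα, zero_le_one, by simp [hy, shape], by grind⟩

lemma BalancedShape.of_derives {c c' : Word × ℕ} (hc : BalancedShape c)
    (h : Derives anbnSystem c c') : BalancedShape c' := by
  induction h with
  | refl => exact hc
  | tail _ hstep ih => exact ih.step hstep

lemma derives_shape (n : ℕ) : Derives anbnSystem ([2, 3], 1) (shape 1 n 1 n, 1) := by
  induction n with
  | zero => exact .refl
  | succ n ih =>
    have insert_a : Step anbnSystem (shape 1 n 1 n, 1) (shape 1 (n + 1) 1 n, 2) :=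
      step_of_mem_of_applies (r := insRule [2] [0] []) (by simp [anbnSystem]) <|
        insRule_applies_iff.2 ⟨[], replicate n 0 ++ 3 :: replicate n 1,
          by simp [shape], by simp [shape, replicate_succ]⟩
    have insert_b : Step anbnSystem (shape 1 (n + 1) 1 n, 2) (shape 1 (n + 1) 1 (n + 1), 1) :=
      step_of_mem_of_applies (r := insRule [3] [1] []) (by simp [anbnSystem]) <|
        insRule_applies_iff.2 ⟨2 :: replicate (n + 1) 0, replicate n 1,
          by simp [shape], by simp [shape, replicate_succ]⟩
    exact (ih.tail insert_a).tail insert_b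

lemma derives_anbn (n : ℕ) :
    Derives anbnSystem ([2, 3], 1) (replicate n 0 ++ replicate n 1, 1) := by
  have delete_A : Step anbnSystem (shape 1 n 1 n, 1) (shape 0 n 1 n, 2) :=
    step_of_mem_of_applies (r := delRule [] [2] []) (by simp [anbnSystem]) <|
      delRule_applies_iff.2 ⟨[], shape 0 n 1 n, by simp [shape], by simp⟩
  have delete_B : Step anbnSystem (shape 0 n 1 n, 2) (replicate n 0 ++ replicate n 1, 1) :=
    step_of_mem_of_applies (r := delRule [] [3] []) (by simp [anbnSystem]) <|
      delRule_applies_iff.2 ⟨replicate n 0, replicate n 1, by simp [shape], by simp⟩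
  exact ((derives_shape n).tail delete_A).tail delete_B

lemma shape_nonterminal_exponents_eq_zero {α n β m : ℕ}
    (hT : ∀ a ∈ shape α n β m, a ∈ ({0, 1} : Finset ℕ)) : α = 0 ∧ β = 0 := by
  constructor
  · by_contra h
    simpa using hT 2 (by simp [shape, mem_replicate, h])
  · by_contra h
    simpa using hT 3 (by simp [shape, mem_replicate, h])

theorem language_anbnSystem : language anbnSystem = anbnLang := by
  ext w
  constructor
  · rintro ⟨hT, x, hx, f, hf, hd⟩
    simp only [anbnSystem, Finset.mem_singleton] at hx hf
    subst hx hf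
    obtain ⟨α, n, β, m, -, -, hw, hbal⟩ :=
      BalancedShape.of_derives ⟨1, 0, 1, 0, le_rfl, le_rfl, rfl, rfl⟩ hd
    obtain rfl : w = shape α n β m := hw
    obtain ⟨rfl, rfl⟩ := shape_nonterminal_exponents_eq_zero hT
    obtain rfl : n = m := by simpa using hbal
    exact ⟨n, by simp [shape]⟩
  · rintro ⟨n, rfl⟩
    refine ⟨?_, [2, 3], by simp [anbnSystem], 1, by simp [anbnSystem], derives_anbn n⟩
    intro a ha
    simp only [mem_append, mem_replicate] at ha
    rcases ha with ⟨-, rfl⟩ | ⟨-, rfl⟩ <;> decide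

theorem starControlled_anbnSystem : StarControlled anbnSystem := by
  unfold StarControlled
  decide

theorem hasSize_anbnSystem : HasSize anbnSystem 2 1 1 0 1 0 0 := by
  unfold HasSize InsDelRule.SizeLE
  decide

/-- The system `anbnSystem` is star-controlled, generates exactly the
non-regular language `{ aⁿbⁿ : n ≥ 0 }`, and in particular this language
belongs to `GCID_S(2; 1, 1, 0; 1, 0, 0)`. -/
theorem anbnSystem_generates_anbn :
    StarControlled anbnSystem ∧ language anbnSystem = anbnLang ∧
      anbnLang ∈ GCID_S 2 1 1 0 1 0 0 :=
  ⟨starControlled_anbnSystem, language_anbnSystem,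
    anbnSystem, starControlled_anbnSystem, hasSize_anbnSystem, language_anbnSystem⟩

end GCIDPaper
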